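/- arXiv:math/0701339 — 3 statements merged into one kernel-verified Lean document; each statement's English description precedes it below -/
import Mathlib

section
/- Double Gaussian elimination (Lemma A.2 of the paper): Let 𝒞 be a preadditive category with finite biproducts, and consider a five-term cochain complex in 𝒞: A ⟶ B ⊞ C ⟶ D₁ ⊞ D₂ ⊞ E ⟶ F ⊞ G ⟶ H, whose differentials have matrix components as follows: the first differential has components b₁ : A ⟶ B and α : A ⟶ C; the second has components ψ : B ⟶ D₁, β : C ⟶ D₁, b₂ : B ⟶ D₂, b₃ : C ⟶ D₂, γ : B ⟶ E, δ : C ⟶ E; the third has components b₄ : D₁ ⟶ F, φ : D₂ ⟶ F, λ : E ⟶ F, b₅ : D₁ ⟶ G, μ : D₂ ⟶ G, ν : E ⟶ G; the fourth has components b₆ : F ⟶ H and η : G ⟶ H. Assume consecutive differentials compose to zero and that ψ : B ⟶ D₁ and φ : D₂ ⟶ F are isomorphisms. Then the five-term sequence A ⟶(α) C ⟶(δ − γψ⁻¹β) E ⟶(ν − μφ⁻¹λ) G ⟶(η) H is a cochain complex, and the degreewise maps given by: identity on A; (0, 1) : B ⊞ C ⟶ C; (−ψ⁻¹γ, 0,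 1) : D₁ ⊞ D₂ ⊞ E ⟶ E [with D₁-component −(ψ⁻¹ then γ)]; (−φ⁻¹μ, 1) : F ⊞ G ⟶ G [with F-component −(φ⁻¹ then μ)]; identity on H, together with the maps in the other direction: identity on A; (−ψ⁻¹β; 1) : C ⟶ B ⊞ C [with B-component −(β then ψ⁻¹)]; (0; −φ⁻¹λ; 1) : E ⟶ D₁ ⊞ D₂ ⊞ E [with D₂-component −(λ then φ⁻¹)]; (0; 1) : G ⟶ F ⊞ G; identity on H, are chain maps forming a homotopy equivalence between the two complexes. -/
open CategoryTheory CategoryTheory.Limits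

attribute [local instance] CategoryTheory.Limits.hasBinaryBiproducts_of_finite_biproducts

/-- **Double Gaussian elimination** (Lemma A.2).  Given a five-term cochain complex
`A ⟶ B ⊞ C ⟶ D₁ ⊞ D₂ ⊞ E ⟶ F ⊞ G ⟶ H` in a preadditive category with finite
biproducts, whose differentials have the indicated matrix components, with
`ψ : B ⟶ D₁` and `φ : D₂ ⟶ F` isomorphisms, the reduced five-term sequence
`A ⟶ C ⟶ E ⟶ G ⟶ H` (with differentials `α`, `δ - γψ⁻¹β`, `ν - μφ⁻¹λ`, `η`) is a
cochain complex, and the indicated degreewise maps are chain maps forming a homotopy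
equivalence between the two complexes. -/
theorem double_gaussian_elimination
    {𝒞 : Type*} [Category 𝒞] [Preadditive 𝒞] [HasFiniteBiproducts 𝒞]
    (A B C D₁ D₂ E F G H : 𝒞)
    (b₁ : A ⟶ B) (α : A ⟶ C)
    (ψ : B ⟶ D₁) (β : C ⟶ D₁) (b₂ : B ⟶ D₂) (b₃ : C ⟶ D₂) (γ : B ⟶ E) (δ : C ⟶ E)
    (b₄ : D₁ ⟶ F) (φ : D₂ ⟶ F) (lam : E ⟶ F) (b₅ : D₁ ⟶ G) (μ : D₂ ⟶ G) (ν : E ⟶ G)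
    (b₆ : F ⟶ H) (η : G ⟶ H)
    [IsIso ψ] [IsIso φ]
    -- the differentials of the five-term complex, given by their matrix components:
    (d₀ : A ⟶ B ⊞ C) (d₁ : (B ⊞ C) ⟶ D₁ ⊞ D₂ ⊞ E) (d₂ : (D₁ ⊞ D₂ ⊞ E) ⟶ F ⊞ G)
    (d₃ : (F ⊞ G) ⟶ H)
    (hd₀ : d₀ = biprod.lift b₁ α)
    (hd₁ : d₁ = biprod.desc (biprod.lift ψ (biprod.lift b₂ γ))
                            (biprod.lift β (biprod.lift b₃ δ)))
    (hd₂ : d₂ = biprod.desc (biprod.lift b₄ b₅)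
                            (biprod.desc (biprod.lift φ μ) (biprod.lift lam ν)))
    (hd₃ : d₃ = biprod.desc b₆ η)
    -- consecutive differentials compose to zero:
    (h01 : d₀ ≫ d₁ = 0) (h12 : d₁ ≫ d₂ = 0) (h23 : d₂ ≫ d₃ = 0) :
    -- the reduced sequence `A ⟶ C ⟶ E ⟶ G ⟶ H` is a cochain complex:
    α ≫ (δ - β ≫ inv ψ ≫ γ) = 0 ∧
    (δ - β ≫ inv ψ ≫ γ) ≫ (ν - lam ≫ inv φ ≫ μ) = 0 ∧
    (ν - lam ≫ inv φ ≫ μ) ≫ η = 0 ∧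
    -- the explicit degreewise maps `p` (downwards) and `i` (upwards):
    ∃ (p₀ : A ⟶ A) (p₁ : (B ⊞ C) ⟶ C) (p₂ : (D₁ ⊞ D₂ ⊞ E) ⟶ E) (p₃ : (F ⊞ G) ⟶ G)
      (p₄ : H ⟶ H)
      (i₀ : A ⟶ A) (i₁ : C ⟶ B ⊞ C) (i₂ : E ⟶ D₁ ⊞ D₂ ⊞ E) (i₃ : G ⟶ F ⊞ G)
      (i₄ : H ⟶ H),
      p₀ = 𝟙 A ∧
      p₁ = biprod.snd ∧
      p₂ = biprod.desc (-(inv ψ ≫ γ)) (biprod.desc 0 (𝟙 E)) ∧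
      p₃ = biprod.desc (-(inv φ ≫ μ)) (𝟙 G) ∧
      p₄ = 𝟙 H ∧
      i₀ = 𝟙 A ∧
      i₁ = biprod.lift (-(β ≫ inv ψ)) (𝟙 C) ∧
      i₂ = biprod.lift 0 (biprod.lift (-(lam ≫ inv φ)) (𝟙 E)) ∧
      i₃ = biprod.lift 0 (𝟙 G) ∧
      i₄ = 𝟙 H ∧
      -- `p` is a chain map:
      d₀ ≫ p₁ = p₀ ≫ α ∧
      d₁ ≫ p₂ = p₁ ≫ (δ - β ≫ inv ψ ≫ γ) ∧
      d₂ ≫ p₃ = p₂ ≫ (ν - lam ≫ inv φ ≫ μ) ∧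
      d₃ ≫ p₄ = p₃ ≫ η ∧
      -- `i` is a chain map:
      α ≫ i₁ = i₀ ≫ d₀ ∧
      (δ - β ≫ inv ψ ≫ γ) ≫ i₂ = i₁ ≫ d₁ ∧
      (ν - lam ≫ inv φ ≫ μ) ≫ i₃ = i₂ ≫ d₂ ∧
      η ≫ i₄ = i₃ ≫ d₃ ∧
      -- `i ≫ p` is chain homotopic to the identity of the reduced complex:
      (∃ (s₁ : C ⟶ A) (s₂ : E ⟶ C) (s₃ : G ⟶ E) (s₄ : H ⟶ G),
        i₀ ≫ p₀ - 𝟙 A = α ≫ s₁ ∧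
        i₁ ≫ p₁ - 𝟙 C = (δ - β ≫ inv ψ ≫ γ) ≫ s₂ + s₁ ≫ α ∧
        i₂ ≫ p₂ - 𝟙 E = (ν - lam ≫ inv φ ≫ μ) ≫ s₃ + s₂ ≫ (δ - β ≫ inv ψ ≫ γ) ∧
        i₃ ≫ p₃ - 𝟙 G = η ≫ s₄ + s₃ ≫ (ν - lam ≫ inv φ ≫ μ) ∧
        i₄ ≫ p₄ - 𝟙 H = s₄ ≫ η) ∧
      -- `p ≫ i` is chain homotopic to the identity of the original complex:
      (∃ (t₁ : (B ⊞ C) ⟶ A) (t₂ : (D₁ ⊞ D₂ ⊞ E) ⟶ B ⊞ C)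
         (t₃ : (F ⊞ G) ⟶ D₁ ⊞ D₂ ⊞ E) (t₄ : H ⟶ F ⊞ G),
        p₀ ≫ i₀ - 𝟙 A = d₀ ≫ t₁ ∧
        p₁ ≫ i₁ - 𝟙 (B ⊞ C) = d₁ ≫ t₂ + t₁ ≫ d₀ ∧
        p₂ ≫ i₂ - 𝟙 (D₁ ⊞ D₂ ⊞ E) = d₂ ≫ t₃ + t₂ ≫ d₁ ∧
        p₃ ≫ i₃ - 𝟙 (F ⊞ G) = d₃ ≫ t₄ + t₃ ≫ d₂ ∧
        p₄ ≫ i₄ - 𝟙 H = t₄ ≫ d₃) := by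

  subst hd₀ hd₁ hd₂ hd₃
  simp only [biprod.lift_desc] at h01 h12 h23
  have e1 := h01 =≫ biprod.fst
  have e2 := (h01 =≫ biprod.snd) =≫ biprod.fst
  have e3 := (h01 =≫ biprod.snd) =≫ biprod.snd
  have f1 := (biprod.inl ≫= h12) =≫ biprod.fst
  have f2 := (biprod.inl ≫= h12) =≫ biprod.snd
  have g1 := (biprod.inr ≫= h12) =≫ biprod.fst
  have g2 := (biprod.inr ≫= h12) =≫ biprod.snd
  have k1 := biprod.inl ≫= h23
  have k2 := biprod.inl ≫= (biprod.inr ≫= h23)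
  have k3 := biprod.inr ≫= (biprod.inr ≫= h23)
  simp at e1 e2 e3 f1 f2 g1 g2 k1 k2 k3
  have eαβ : α ≫ β = -(b₁ ≫ ψ) := by rw [eq_neg_iff_add_eq_zero, ← e1]; abel
  have eαb₃ : α ≫ b₃ = -(b₁ ≫ b₂) := by rw [eq_neg_iff_add_eq_zero, ← e2]; abel
  have eαδ : α ≫ δ = -(b₁ ≫ γ) := by rw [eq_neg_iff_add_eq_zero, ← e3]; abel
  have eγlam : γ ≫ lam = -(ψ ≫ b₄) - b₂ ≫ φ := by
    rw [eq_sub_iff_add_eq', eq_neg_iff_add_eq_zero, ← f1]; abel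
  have eγν : γ ≫ ν = -(ψ ≫ b₅) - b₂ ≫ μ := by
    rw [eq_sub_iff_add_eq', eq_neg_iff_add_eq_zero, ← f2]; abel
  have eδlam : δ ≫ lam = -(β ≫ b₄) - b₃ ≫ φ := by
    rw [eq_sub_iff_add_eq', eq_neg_iff_add_eq_zero, ← g1]; abel
  have eδν : δ ≫ ν = -(β ≫ b₅) - b₃ ≫ μ := by
    rw [eq_sub_iff_add_eq', eq_neg_iff_add_eq_zero, ← g2]; abel
  have eb₅η : b₅ ≫ η = -(b₄ ≫ b₆) := by rw [eq_neg_iff_add_eq_zero, ← k1]; abel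
  have eμη : μ ≫ η = -(φ ≫ b₆) := by rw [eq_neg_iff_add_eq_zero, ← k2]; abel
  have eνη : ν ≫ η = -(lam ≫ b₆) := by rw [eq_neg_iff_add_eq_zero, ← k3]; abel
  have rαβ := reassoc_of% eαβ
  have rαδ := reassoc_of% eαδ
  have rγlam := reassoc_of% eγlam
  have rγν := reassoc_of% eγν
  have rδlam := reassoc_of% eδlam
  have rδν := reassoc_of% eδν
  have rμη := reassoc_of% eμη
  have rνη := reassoc_of% eνη
  refine ⟨?_, ?_, ?_, 𝟙 A, biprod.snd,
    biprod.desc (-(inv ψ ≫ γ)) (biprod.desc 0 (𝟙 E)),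
    biprod.desc (-(inv φ ≫ μ)) (𝟙 G), 𝟙 H, 𝟙 A,
    biprod.lift (-(β ≫ inv ψ)) (𝟙 C),
    biprod.lift 0 (biprod.lift (-(lam ≫ inv φ)) (𝟙 E)),
    biprod.lift 0 (𝟙 G), 𝟙 H,
    rfl, rfl, rfl, rfl, rfl, rfl, rfl, rfl, rfl, rfl,
    ?_, ?_, ?_, ?_, ?_, ?_, ?_, ?_,
    ⟨0, 0, 0, 0, ?_, ?_, ?_, ?_, ?_⟩,
    ⟨0, biprod.desc (-(inv ψ) ≫ biprod.inl) 0,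
      biprod.desc (biprod.lift 0 (biprod.lift (-(inv φ)) 0)) 0, 0, ?_, ?_, ?_, ?_, ?_⟩⟩
  · simp [eαβ, eαb₃, eαδ, eγlam, eγν, eδlam, eδν, eb₅η, eμη, eνη, rαβ, rαδ, rγlam, rγν, rδlam, rδν, rμη, rνη, Preadditive.comp_sub, Preadditive.sub_comp]
    try abel
  · simp [eαβ, eαb₃, eαδ, eγlam, eγν, eδlam, eδν, eb₅η, eμη, eνη, rαβ, rαδ, rγlam, rγν, rδlam, rδν, rμη, rνη, Preadditive.comp_sub, Preadditive.sub_comp]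
    try abel
  · simp [eαβ, eαb₃, eαδ, eγlam, eγν, eδlam, eδν, eb₅η, eμη, eνη, rαβ, rαδ, rγlam, rγν, rδlam, rδν, rμη, rνη, Preadditive.comp_sub, Preadditive.sub_comp]
    try abel
  · simp [eαβ, eαb₃, eαδ, eγlam, eγν, eδlam, eδν, eb₅η, eμη, eνη, rαβ, rαδ, rγlam, rγν, rδlam, rδν, rμη, rνη, Preadditive.comp_sub, Preadditive.sub_comp]
  · ext <;> simp [eαβ, eαb₃, eαδ, eγlam, eγν, eδlam, eδν, eb₅η, eμη, eνη, rαβ, rαδ, rγlam, rγν, rδlam, rδν, rμη, rνη, Preadditive.comp_sub, Preadditive.sub_comp] <;> try abel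
  · ext <;> simp [eαβ, eαb₃, eαδ, eγlam, eγν, eδlam, eδν, eb₅η, eμη, eνη, rαβ, rαδ, rγlam, rγν, rδlam, rδν, rμη, rνη, Preadditive.comp_sub, Preadditive.sub_comp] <;> try abel
  · ext <;> simp [eαβ, eαb₃, eαδ, eγlam, eγν, eδlam, eδν, eb₅η, eμη, eνη, rαβ, rαδ, rγlam, rγν, rδlam, rδν, rμη, rνη, Preadditive.comp_sub, Preadditive.sub_comp] <;> try abel
  · ext <;> simp [eαβ, eαb₃, eαδ, eγlam, eγν, eδlam, eδν, eb₅η, eμη, eνη, rαβ, rαδ, rγlam, rγν, rδlam, rδν, rμη, rνη, Preadditive.comp_sub, Preadditive.sub_comp] <;> try abel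
  · ext <;> simp [eαβ, eαb₃, eαδ, eγlam, eγν, eδlam, eδν, eb₅η, eμη, eνη, rαβ, rαδ, rγlam, rγν, rδlam, rδν, rμη, rνη, Preadditive.comp_sub, Preadditive.sub_comp] <;> try abel
  · ext <;> simp [eαβ, eαb₃, eαδ, eγlam, eγν, eδlam, eδν, eb₅η, eμη, eνη, rαβ, rαδ, rγlam, rγν, rδlam, rδν, rμη, rνη, Preadditive.comp_sub, Preadditive.sub_comp] <;> try abel
  · simp [eαβ, eαb₃, eαδ, eγlam, eγν, eδlam, eδν, eb₅η, eμη, eνη, rαβ, rαδ, rγlam, rγν, rδlam, rδν, rμη, rνη, Preadditive.comp_sub, Preadditive.sub_comp]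
  · simp [eαβ, eαb₃, eαδ, eγlam, eγν, eδlam, eδν, eb₅η, eμη, eνη, rαβ, rαδ, rγlam, rγν, rδlam, rδν, rμη, rνη, Preadditive.comp_sub, Preadditive.sub_comp]
  · simp [eαβ, eαb₃, eαδ, eγlam, eγν, eδlam, eδν, eb₅η, eμη, eνη, rαβ, rαδ, rγlam, rγν, rδlam, rδν, rμη, rνη, Preadditive.comp_sub, Preadditive.sub_comp]
  · simp [eαβ, eαb₃, eαδ, eγlam, eγν, eδlam, eδν, eb₅η, eμη, eνη, rαβ, rαδ, rγlam, rγν, rδlam, rδν, rμη, rνη, Preadditive.comp_sub, Preadditive.sub_comp]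
  · simp [eαβ, eαb₃, eαδ, eγlam, eγν, eδlam, eδν, eb₅η, eμη, eνη, rαβ, rαδ, rγlam, rγν, rδlam, rδν, rμη, rνη, Preadditive.comp_sub, Preadditive.sub_comp]
  · simp [eαβ, eαb₃, eαδ, eγlam, eγν, eδlam, eδν, eb₅η, eμη, eνη, rαβ, rαδ, rγlam, rγν, rδlam, rδν, rμη, rνη, Preadditive.comp_sub, Preadditive.sub_comp]
  · simp [eαβ, eαb₃, eαδ, eγlam, eγν, eδlam, eδν, eb₅η, eμη, eνη, rαβ, rαδ, rγlam, rγν, rδlam, rδν, rμη, rνη, Preadditive.comp_sub, Preadditive.sub_comp]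
  · ext <;> simp [eαβ, eαb₃, eαδ, eγlam, eγν, eδlam, eδν, eb₅η, eμη, eνη, rαβ, rαδ, rγlam, rγν, rδlam, rδν, rμη, rνη, Preadditive.comp_sub, Preadditive.sub_comp] <;> try abel
  · ext <;> simp [eαβ, eαb₃, eαδ, eγlam, eγν, eδlam, eδν, eb₅η, eμη, eνη, rαβ, rαδ, rγlam, rγν, rδlam, rδν, rμη, rνη, Preadditive.comp_sub, Preadditive.sub_comp] <;> try abel
  · ext <;> simp [eαβ, eαb₃, eαδ, eγlam, eγν, eδlam, eδν, eb₅η, eμη, eνη, rαβ, rαδ, rγlam, rγν, rδlam, rδν, rμη, rνη, Preadditive.comp_sub, Preadditive.sub_comp] <;> try abel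
  · simp [eαβ, eαb₃, eαδ, eγlam, eγν, eδlam, eδν, eb₅η, eμη, eνη, rαβ, rαδ, rγlam, rγν, rδlam, rδν, rμη, rνη, Preadditive.comp_sub, Preadditive.sub_comp]
end

section
/- Sprinkling units lemma: Let R be a commutative ring and 𝒞 an R-linear preadditive category whose hom-modules are torsion-free over R (i.e. if r • m = 0 for a scalar r : R and a morphism m ≠ 0, then r = 0). An n-dimensional anticommutative cube in 𝒞 consists of objects X v for each vertex v : Fin n → Bool, together with, for each vertex v and each index i with v i = false, an edge morphism f_{v,i} : X v ⟶ X (v[i ↦ true]), such that every square anticommutes: for all i ≠ j with v i = v j = false, f_{v,i} followed by f_{v[i↦true],j} equals the negative of f_{v,j} followed by f_{v[j↦true],i}. Suppose (X, f) and (X, g) are two anticommutative cubes with identical objects such that each edge of g is a unit multiple of the corresponding edge of f, say g_{v,i} = u_{v,i} • f_{v,i} with u_{v,i} ∈ Rˣ, and suppose the composition of any two composable edges of f is nonzero. Then the two cubes are isomorphic via a map which multiplies each object by a unit: there exists a family of units ε : (Fin n → Bool) → Rˣ such that for every vertex v and every i with v i = false, (ε v) • g_{v,i} = (ε (v[i ↦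 true])) • f_{v,i}; equivalently, the morphisms (ε v) • 𝟙_{X v} constitute an isomorphism from the cube (X, f) to the cube (X, g). -/
open CategoryTheory Function

/-! The units `u` form an edge labelling of the Boolean cube that is a cocycle: comparing the
anticommutativity relations of `f` and `g` on a square gives `a • p = b • p`, where `a`, `b` are
the products of the units along the two sides and `p` is the nonzero composite of `f` along one
side, so `a = b` by torsion-freeness. A cocycle on the cube is a coboundary: labelling each
vertex `v` by the product of `u` along the path from the bottom vertex to `v` that switches its
coordinates on in increasing order gives `ε (v[i ↦ true]) = ε v * u v i`, and this `ε` rescales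
`f` into `g`. -/

/-- An `n`-dimensional anticommutative cube in a preadditive category: objects `X v` for
each vertex `v : Fin n → Bool`, and for each vertex `v` and index `i` with `v i = false`
an edge morphism `f v i : X v ⟶ X (Function.update v i true)`, such that every square
anticommutes. -/
def IsAnticommutativeCube {𝒞 : Type*} [Category 𝒞] [Preadditive 𝒞] {n : ℕ}
    (X : (Fin n → Bool) → 𝒞)
    (f : ∀ (v : Fin n → Bool) (i : Fin n), v i = false →
      (X v ⟶ X (Function.update v i true))) : Prop :=
  ∀ (v : Fin n → Bool) (i j : Fin n) (hij : i ≠ j) (hi : v i = false) (hj : v j = false),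
    f v i hi ≫ f (Function.update v i true) j
        (by rw [Function.update_of_ne hij.symm]; exact hj) =
      -((f v j hj ≫ f (Function.update v j true) i
            (by rw [Function.update_of_ne hij]; exact hi)) ≫
          eqToHom (congrArg X (Function.update_comm hij.symm true true v)))

namespace BoolCube

variable {M : Type*} [CommMonoid M] {n : ℕ}

def below (v : Fin n → Bool) (j : Fin n) : Fin n → Bool :=
  fun k => v k && decide (k < j)

def IsCocycle (U : (Fin n → Bool) → Fin n → M) : Prop :=
  ∀ (v : Fin n → Bool) (i j : Fin n), i ≠ j → v i = false → v j = false →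
    U v i * U (update v i true) j = U v j * U (update v j true) i

def pathProd (U : (Fin n → Bool) → Fin n → M) (v : Fin n → Bool) : M :=
  ∏ j, if v j then U (below v j) j else 1

theorem below_update_of_le (v : Fin n → Bool) {i j : Fin n} (b : Bool) (hji : j ≤ i) :
    below (update v i b) j = below v j := by
  funext k
  by_cases hk : k = i
  · subst hk
    simp [below, hji.not_gt]
  · simp [below, update_of_ne hk]

theorem below_eq_self {v : Fin n → Bool} {j : Fin n} (hv : ∀ k, j ≤ k → v k = false) :
    below v j = v := by
  funext k
  by_cases hk : k < j
  · simp [below, hk]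
  · simp [below, hk, hv k (not_lt.mp hk)]

theorem pathProd_update_of_forall_gt (U : (Fin n → Bool) → Fin n → M) {v : Fin n → Bool}
    {i : Fin n} (hi : v i = false) (htop : ∀ k, i < k → v k = false) :
    pathProd U (update v i true) = pathProd U v * U v i := by
  have hterm : ∀ j, (if update v i true j then U (below (update v i true) j) j else 1) =
      (if v j then U (below v j) j else 1) * if j = i then U v i else 1 := by
    intro j
    rcases lt_trichotomy j i with hj | rfl | hj
    · simp [hj.ne, below_update_of_le v true hj.le]
    · have hbelow : below v j = v := below_eq_self fun k hk =>
        hk.eq_or_lt.elim (fun h => h ▸ hi) (htop k)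
      simp [hi, below_update_of_le v true le_rfl, hbelow]
    · simp [hj.ne', htop j hj]
  simp only [pathProd, hterm, Finset.prod_mul_distrib, Finset.prod_ite_eq', Finset.mem_univ,
    if_true]

theorem IsCocycle.pathProd_update {U : (Fin n → Bool) → Fin n → M} (hU : IsCocycle U)
    {v : Fin n → Bool} {i : Fin n} (hi : v i = false) :
    pathProd U (update v i true) = pathProd U v * U v i := by
  -- Induction on a bound `k` for the coordinates above `i` that are switched on: the
  -- largest one is moved past `i` by one square.
  suffices key : ∀ (k : ℕ) (v : Fin n → Bool), v i = false →
      (∀ m, i < m → k ≤ (m : ℕ) → v m = false) →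
      pathProd U (update v i true) = pathProd U v * U v i from
    key n v hi fun m _ hm => absurd m.isLt (by omega)
  intro k
  induction k with
  | zero =>
    exact fun v hi hv => pathProd_update_of_forall_gt U hi fun m hm => hv m hm (Nat.zero_le _)
  | succ k ih =>
    intro v hi hv
    by_cases hk : ∃ j : Fin n, (j : ℕ) = k ∧ i < j ∧ v j = true
    · obtain ⟨j, rfl, hij, hj⟩ := hk
      obtain ⟨w, hwj, rfl⟩ : ∃ w, w j = false ∧ v = update w j true :=
        ⟨update v j false, by simp, by simp [hj]⟩
      have hwi : w i = false := by rwa [update_of_ne hij.ne] at hi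
      have hwtop : ∀ m, j < m → w m = false := fun m hm => by
        simpa [update_of_ne hm.ne'] using hv m (hij.trans hm) hm
      have hw : ∀ m, i < m → (j : ℕ) ≤ m → w m = false := fun m _ hjm =>
        (eq_or_ne m j).elim (fun h => h ▸ hwj) fun h =>
          hwtop m (Fin.lt_def.mpr (lt_of_le_of_ne hjm (Fin.val_ne_of_ne h.symm)))
      have hwij : update w i true j = false := by rwa [update_of_ne hij.ne']
      have hwitop : ∀ m, j < m → update w i true m = false := fun m hm => by
        rw [update_of_ne (hij.trans hm).ne']
        exact hwtop m hm
      calc pathProd U (update (update w j true) i true)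
          = pathProd U (update (update w i true) j true) := by rw [update_comm hij.ne']
        _ = pathProd U w * (U w i * U (update w i true) j) := by
          rw [pathProd_update_of_forall_gt U hwij hwitop, ih w hwi hw, mul_assoc]
        _ = pathProd U w * (U w j * U (update w j true) i) := by rw [hU w i j hij.ne hwi hwj]
        _ = pathProd U (update w j true) * U (update w j true) i := by
          rw [pathProd_update_of_forall_gt U hwj hwtop, mul_assoc]
    · refine ih v hi fun m him hkm => ?_
      rcases hkm.eq_or_lt with h | h
      · simpa [h] using fun hm : v m = true => hk ⟨m, h.symm, him, hm⟩
      · exact hv m him h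

end BoolCube

theorem IsAnticommutativeCube.square_units_mul_eq {R : Type*} [CommRing R] {𝒞 : Type*}
    [Category 𝒞] [Preadditive 𝒞] [Linear R 𝒞]
    (htf : ∀ (Y Z : 𝒞) (r : R) (m : Y ⟶ Z), r • m = 0 → m ≠ 0 → r = 0)
    {n : ℕ} {X : (Fin n → Bool) → 𝒞}
    {f g : ∀ (v : Fin n → Bool) (i : Fin n), v i = false → (X v ⟶ X (update v i true))}
    (hf : IsAnticommutativeCube X f) (hg : IsAnticommutativeCube X g)
    (u : ∀ (v : Fin n → Bool) (i : Fin n), v i = false → Rˣ)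
    (hu : ∀ (v : Fin n → Bool) (i : Fin n) (hi : v i = false),
      g v i hi = (u v i hi : R) • f v i hi)
    {v : Fin n → Bool} {i j : Fin n} (hij : i ≠ j) (hi : v i = false) (hj : v j = false)
    (hj' : update v i true j = false) (hi' : update v j true i = false)
    (hnz : f v i hi ≫ f (update v i true) j hj' ≠ 0) :
    u v i hi * u (update v i true) j hj' = u v j hj * u (update v j true) i hi' := by
  have hsquare := hg v i j hij hi hj
  simp only [hu, Linear.smul_comp, Linear.comp_smul, smul_smul] at hsquare
  rw [← smul_neg, ← hf v i j hij hi hj, ← sub_eq_zero, ← sub_smul] at hsquare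
  have hcoeff := htf _ _ _ _ hsquare hnz
  ext
  simp only [Units.val_mul]
  linear_combination hcoeff

/-- **Sprinkling units.**  Let `𝒞` be an `R`-linear preadditive category with torsion-free
hom-modules.  If `(X, f)` and `(X, g)` are two anticommutative cubes with identical objects,
each edge of `g` is a unit multiple of the corresponding edge of `f`, and the composition
of any two composable edges of `f` is nonzero, then the two cubes are isomorphic via a map
multiplying each object by a unit: there are units `ε v` with
`(ε v) • g v i = (ε (v[i ↦ true])) • f v i` for every edge. -/
theorem sprinkling_units
    {R : Type*} [CommRing R] {𝒞 : Type*} [Category 𝒞] [Preadditive 𝒞]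
    [CategoryTheory.Linear R 𝒞]
    -- the hom-modules of `𝒞` are torsion-free over `R`:
    (htf : ∀ (Y Z : 𝒞) (r : R) (m : Y ⟶ Z), r • m = 0 → m ≠ 0 → r = 0)
    {n : ℕ} (X : (Fin n → Bool) → 𝒞)
    (f g : ∀ (v : Fin n → Bool) (i : Fin n), v i = false →
      (X v ⟶ X (Function.update v i true)))
    (hf : IsAnticommutativeCube X f) (hg : IsAnticommutativeCube X g)
    -- each edge of `g` is a unit multiple of the corresponding edge of `f`:
    (u : ∀ (v : Fin n → Bool) (i : Fin n), v i = false → Rˣ)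
    (hu : ∀ (v : Fin n → Bool) (i : Fin n) (hi : v i = false),
      g v i hi = (u v i hi : R) • f v i hi)
    -- the composition of any two composable edges of `f` is nonzero:
    (hnz : ∀ (v : Fin n → Bool) (i j : Fin n) (hij : i ≠ j)
      (hi : v i = false) (hj : v j = false),
      f v i hi ≫ f (Function.update v i true) j
          (by rw [Function.update_of_ne hij.symm]; exact hj) ≠ 0) :
    ∃ ε : (Fin n → Bool) → Rˣ,
      ∀ (v : Fin n → Bool) (i : Fin n) (hi : v i = false),
        (ε v : R) • g v i hi = (ε (Function.update v i true) : R) • f v i hi := by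
  let U : (Fin n → Bool) → Fin n → Rˣ := fun v i => if h : v i = false then u v i h else 1
  have hU : ∀ v i (hi : v i = false), U v i = u v i hi := fun v i hi => dif_pos hi
  have hcocycle : BoolCube.IsCocycle U := by
    intro v i j hij hi hj
    have hj' : update v i true j = false := by rwa [update_of_ne hij.symm]
    have hi' : update v j true i = false := by rwa [update_of_ne hij]
    rw [hU v i hi, hU _ _ hj', hU v j hj, hU _ _ hi']
    exact hf.square_units_mul_eq htf hg u hu hij hi hj hj' hi' (hnz v i j hij hi hj)
  refine ⟨BoolCube.pathProd U, fun v i hi => ?_⟩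
  rw [hu, hcocycle.pathProd_update hi, smul_smul, Units.val_mul, hU v i hi]
end

section
/- Homotopy isolation determines homotopy class (Lemma on homotopically isolated objects, as used for the movie-move checks): Let R be a commutative ring, 𝒞 an R-linear preadditive category, K and L cochain complexes in 𝒞 indexed by ℤ, and f, g : K ⟶ L chain maps. Fix i ∈ ℤ and let ι : A ⟶ K.X i be a split monomorphism exhibiting A as a direct summand of K.X i, and assume A is homotopically isolated with respect to L at degree i: for every family of morphisms h_j : K.X j ⟶ L.X (j−1), one has ι ≫ h_i ≫ d^L_{i−1} + ι ≫ d^K_i ≫ h_{i+1} = 0. Suppose α : R is a scalar such that f is chain homotopic to α • g, that f and g agree on A in degree i (ι ≫ f_i = ι ≫ g_i), that ι ≫ g_i ≠ 0, and that the hom-module Hom_𝒞(A, L.X i) is torsion-free over R (r • m = 0 with m ≠ 0 implies r = 0). Then α = 1, and f and g are chain homotopic. -/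
open CategoryTheory

/-!
Restricted to the isolated summand `A`, every null-homotopic map `d h + h d` vanishes, so the
homotopy `f ≃ α • g` gives `ι ≫ f.f i = α • (ι ≫ g.f i)`. As `f` and `g` agree on `A`, the
nonzero morphism `ι ≫ g.f i` is fixed by `α`, and torsion-freeness forces `α = 1`; the given
homotopy is then one from `f` to `g`.
-/

theorem eq_one_of_smul_eq_self {R M : Type*} [Ring R] [AddCommGroup M] [Module R M]
    (htf : ∀ (r : R) (m : M), r • m = 0 → m ≠ 0 → r = 0) {α : R} {x : M} (hx : x ≠ 0)
    (h : α • x = x) : α = 1 := by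
  have hfix : (α - 1) • x = 0 := by rw [sub_smul, one_smul, h, sub_self]
  exact sub_eq_zero.mp (htf _ _ hfix hx)

namespace CochainComplex

variable {𝒞 : Type*} [Category 𝒞] [Preadditive 𝒞] {K L : CochainComplex 𝒞 ℤ}

def nullHomotopicComponent (h : ∀ j : ℤ, K.X j ⟶ L.X (j - 1)) (m : ℤ) : K.X m ⟶ L.X m :=
  h m ≫ L.d (m - 1) m +
    K.d m (m + 1) ≫ h (m + 1) ≫ eqToHom (congrArg L.X (Int.add_sub_cancel m 1))

theorem comp_eq_comp_of_sub_eq_nullHomotopicComponent {i : ℤ} {A : 𝒞} (ι : A ⟶ K.X i)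
    (hiso : ∀ h : ∀ j : ℤ, K.X j ⟶ L.X (j - 1),
      ι ≫ h i ≫ L.d (i - 1) i +
        ι ≫ K.d i (i + 1) ≫ h (i + 1) ≫
          eqToHom (congrArg L.X (Int.add_sub_cancel i 1)) = 0)
    {φ ψ : K.X i ⟶ L.X i} (h : ∀ j : ℤ, K.X j ⟶ L.X (j - 1))
    (hφψ : φ - ψ = nullHomotopicComponent h i) : ι ≫ φ = ι ≫ ψ := by
  rw [← sub_eq_zero, ← Preadditive.comp_sub, hφψ, nullHomotopicComponent,
    Preadditive.comp_add]
  exact hiso h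

end CochainComplex

/-- **Homotopy isolation determines homotopy class.**  Let `K`, `L` be ℤ-indexed cochain
complexes in an `R`-linear preadditive category, `f g : K ⟶ L` chain maps, and
`ι : A ⟶ K.X i` a split monomorphism exhibiting `A` as a homotopically isolated direct
summand of `K.X i` with respect to `L`.  If `f` is chain homotopic to `α • g`, `f` and `g`
agree on `A` in degree `i`, `ι ≫ g.f i ≠ 0`, and `Hom(A, L.X i)` is torsion-free over `R`,
then `α = 1` and `f` and `g` are chain homotopic. -/
theorem homotopy_isolation_determines_homotopy_class
    {R : Type*} [CommRing R] {𝒞 : Type*} [Category 𝒞] [Preadditive 𝒞]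
    [CategoryTheory.Linear R 𝒞]
    (K L : CochainComplex 𝒞 ℤ) (f g : K ⟶ L) (i : ℤ) (A : 𝒞)
    (ι : A ⟶ K.X i)
    -- `A` is homotopically isolated with respect to `L` at degree `i`:
    (hiso : ∀ h : ∀ j : ℤ, K.X j ⟶ L.X (j - 1),
      ι ≫ h i ≫ L.d (i - 1) i +
        ι ≫ K.d i (i + 1) ≫ h (i + 1) ≫
          eqToHom (congrArg L.X (by omega : i + 1 - 1 = i)) = 0)
    (α : R)
    -- `f` is chain homotopic to `α • g`:
    (hhtpy : ∃ h : ∀ j : ℤ, K.X j ⟶ L.X (j - 1), ∀ m : ℤ,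
      f.f m - α • g.f m =
        h m ≫ L.d (m - 1) m +
          K.d m (m + 1) ≫ h (m + 1) ≫
            eqToHom (congrArg L.X (by omega : m + 1 - 1 = m)))
    -- `f` and `g` agree on `A` in degree `i`:
    (hagree : ι ≫ f.f i = ι ≫ g.f i)
    -- the restriction of `g` to `A` is nonzero:
    (hne : ι ≫ g.f i ≠ 0)
    -- the hom-module `Hom(A, L.X i)` is torsion-free over `R`:
    (htf : ∀ (r : R) (m : A ⟶ L.X i), r • m = 0 → m ≠ 0 → r = 0) :
    α = 1 ∧
      ∃ h : ∀ j : ℤ, K.X j ⟶ L.X (j - 1), ∀ m : ℤ,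
        f.f m - g.f m =
          h m ≫ L.d (m - 1) m +
            K.d m (m + 1) ≫ h (m + 1) ≫
              eqToHom (congrArg L.X (by omega : m + 1 - 1 = m)) := by
  obtain ⟨h, hh⟩ := hhtpy
  have hrestrict : ι ≫ f.f i = ι ≫ (α • g.f i) :=
    CochainComplex.comp_eq_comp_of_sub_eq_nullHomotopicComponent ι hiso h (hh i)
  rw [Linear.comp_smul, hagree] at hrestrict
  obtain rfl : α = 1 := eq_one_of_smul_eq_self htf hne hrestrict.symm
  exact ⟨rfl, h, fun m => by simpa only [one_smul] using hh m⟩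
end
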